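/- In the triangulation D*_{r,t}, the distance between the poles n and s equals 2r, and every vertex v satisfies dist(n, v) + dist(s, v) = 2r. -/

import Mathlib

/-!
The graph distance from the origin in the triangular lattice is `(|x| + |y| + |x - y|) / 2`.
Measure the colatitude `ψ` of a vertex of `D*_{r,t}` by this norm on the northern ball and by
`2r` minus it on the southern ball; it is well defined because the gluing maps boundary to
boundary, and it changes by at most one along every edge, so `dist(n, v) ≥ ψ v` and
`dist(s, v) ≥ 2r - ψ v`. Radial walks in the two balls, crossing the seam once, attain both bounds.
-/

/-- The 6-regular triangular lattice: `(x,y)` is adjacent to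
`(x±1,y)`, `(x,y±1)`, `(x+1,y+1)` and `(x−1,y−1)`. -/
def triLattice : SimpleGraph (ℤ × ℤ) :=
  SimpleGraph.fromRel fun a b =>
    (b.1 - a.1, b.2 - a.2) ∈ ({(1, 0), (0, 1), (1, 1)} : Set (ℤ × ℤ))

/-- The ball of radius `r` around the origin of the triangular lattice. -/
def ball (r : ℕ) : Set (ℤ × ℤ) := {v | triLattice.dist (0, 0) v ≤ r}

/-- The sphere of radius `r` around the origin (boundary of the ball). -/
def sphere (r : ℕ) : Set (ℤ × ℤ) := {v | triLattice.dist (0, 0) v = r}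

/-- Vertices of one copy of the ball of radius `r`. -/
abbrev BallV (r : ℕ) := {v : ℤ × ℤ // v ∈ ball r}

/-- The gluing relation: the boundary vertex `a` of the first (northern) copy
of the ball is identified with the boundary vertex `e a` of the second
(southern) copy; `e` encodes the offset-`t` rotation of the boundary cycle. -/
def glueRel (r : ℕ) (e : ℤ × ℤ → ℤ × ℤ) :
    (BallV r ⊕ BallV r) → (BallV r ⊕ BallV r) → Prop := fun x y =>
  ∃ a b : BallV r, (a : ℤ × ℤ) ∈ sphere r ∧ (b : ℤ × ℤ) = e a ∧
    x = Sum.inl a ∧ y = Sum.inr b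

/-- The vertex set of `D*_{r,t}`: two disjoint copies of the radius-`r` ball
glued along their boundary via `e`. -/
def GluedV (r : ℕ) (e : ℤ × ℤ → ℤ × ℤ) := Quot (glueRel r e)

/-- The triangulation `D*_{r,t}`: edges come from the edges of the two copies
of the ball. -/
def Dstar (r : ℕ) (e : ℤ × ℤ → ℤ × ℤ) : SimpleGraph (GluedV r e) :=
  SimpleGraph.fromRel fun x y => ∃ a b : BallV r,
    triLattice.Adj a.1 b.1 ∧
      ((x = Quot.mk _ (Sum.inl a) ∧ y = Quot.mk _ (Sum.inl b)) ∨
       (x = Quot.mk _ (Sum.inr a) ∧ y = Quot.mk _ (Sum.inr b)))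

/-- The north pole: the centre of the first copy of the ball. -/
def npole (r : ℕ) (e : ℤ × ℤ → ℤ × ℤ) : GluedV r e :=
  Quot.mk _ (Sum.inl ⟨(0, 0), by simp [ball, SimpleGraph.dist_self]⟩)

/-- The south pole: the centre of the second copy of the ball. -/
def spole (r : ℕ) (e : ℤ × ℤ → ℤ × ℤ) : GluedV r e :=
  Quot.mk _ (Sum.inr ⟨(0, 0), by simp [ball, SimpleGraph.dist_self]⟩)

/-- `e` preserves adjacency along the boundary cycle (as the rotation by `t`
does). -/
def SphereAdjPreserving (r : ℕ) (e : ℤ × ℤ → ℤ × ℤ) : Prop :=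
  ∀ a ∈ sphere r, ∀ b ∈ sphere r, (triLattice.Adj a b ↔ triLattice.Adj (e a) (e b))

/-- A corner of the ball: a boundary vertex with only 3 neighbours in the
ball. -/
def Corner (r : ℕ) (v : ℤ × ℤ) : Prop :=
  v ∈ sphere r ∧ (triLattice.neighborSet v ∩ ball r).ncard = 3

namespace SimpleGraph

variable {V : Type*} {G : SimpleGraph V}

theorem Walk.le_add_length_of_forall_adj {f : V → ℕ} (hf : ∀ x y, G.Adj x y → f y ≤ f x + 1)
    {u v : V} (p : G.Walk u v) : f v ≤ f u + p.length := by
  induction p with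
  | nil => simp
  | cons h _ ih =>
    have := hf _ _ h
    rw [Walk.length_cons]
    omega

theorem Reachable.le_add_dist_of_forall_adj {f : V → ℕ} (hf : ∀ x y, G.Adj x y → f y ≤ f x + 1)
    {u v : V} (h : G.Reachable u v) : f v ≤ f u + G.dist u v := by
  obtain ⟨p, hp⟩ := h.exists_walk_length_eq_dist
  exact hp ▸ p.le_add_length_of_forall_adj hf

theorem exists_walk_length_eq_of_forall_exists_adj (f : V → ℕ)
    (hf : ∀ v, f v ≠ 0 → ∃ w, G.Adj w v ∧ f w + 1 = f v) (v : V) :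
    ∃ u, f u = 0 ∧ ∃ p : G.Walk u v, p.length = f v := by
  induction hn : f v generalizing v with
  | zero => exact ⟨v, hn, .nil, rfl⟩
  | succ n ih =>
    obtain ⟨w, hwv, hw⟩ := hf v (by omega)
    obtain ⟨u, hu, p, hp⟩ := ih w (by omega)
    exact ⟨u, hu, p.concat hwv, by rw [Walk.length_concat, hp]⟩

end SimpleGraph

def hexNorm (v : ℤ × ℤ) : ℕ := (v.1.natAbs + v.2.natAbs + (v.1 - v.2).natAbs) / 2

theorem hexNorm_eq_zero_iff {v : ℤ × ℤ} : hexNorm v = 0 ↔ v = 0 := by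
  obtain ⟨x, y⟩ := v
  simp only [hexNorm, Prod.mk_eq_zero]
  omega

theorem triLattice_adj_iff {u v : ℤ × ℤ} : triLattice.Adj u v ↔ hexNorm (v - u) = 1 := by
  obtain ⟨x, y⟩ := u
  obtain ⟨a, b⟩ := v
  simp only [triLattice, SimpleGraph.fromRel_adj, Set.mem_insert_iff, Set.mem_singleton_iff,
    Prod.mk.injEq, ne_eq, hexNorm, Prod.mk_sub_mk]
  omega

theorem hexNorm_le_add_one_of_adj {u v : ℤ × ℤ} (h : triLattice.Adj u v) :
    hexNorm v ≤ hexNorm u + 1 := by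
  rw [triLattice_adj_iff] at h
  obtain ⟨x, y⟩ := u
  obtain ⟨a, b⟩ := v
  simp only [hexNorm, Prod.mk_sub_mk] at *
  omega

theorem exists_adj_hexNorm_add_one_eq {v : ℤ × ℤ} (hv : hexNorm v ≠ 0) :
    ∃ w, triLattice.Adj w v ∧ hexNorm w + 1 = hexNorm v := by
  obtain ⟨x, y⟩ := v
  simp only [triLattice_adj_iff, hexNorm, Prod.exists, Prod.mk_sub_mk] at *
  by_cases hxy : 0 < x ∧ 0 < y
  · exact ⟨x - 1, y - 1, by omega⟩
  by_cases hxy' : x < 0 ∧ y < 0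
  · exact ⟨x + 1, y + 1, by omega⟩
  rcases lt_trichotomy x 0 with hx | hx | hx
  · exact ⟨x + 1, y, by omega⟩
  · rcases lt_or_gt_of_ne (show y ≠ 0 by omega) with hy | hy
    · exact ⟨x, y + 1, by omega⟩
    · exact ⟨x, y - 1, by omega⟩
  · exact ⟨x - 1, y, by omega⟩

theorem exists_adj_hexNorm_eq_add_one (v : ℤ × ℤ) :
    ∃ w, triLattice.Adj w v ∧ hexNorm w = hexNorm v + 1 := by
  obtain ⟨x, y⟩ := v
  simp only [triLattice_adj_iff, hexNorm, Prod.exists, Prod.mk_sub_mk]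
  by_cases hxy : 0 ≤ x ∧ 0 ≤ y
  · exact ⟨x + 1, y + 1, by omega⟩
  by_cases hxy' : x ≤ 0 ∧ y ≤ 0
  · exact ⟨x - 1, y - 1, by omega⟩
  by_cases hx : 0 < x
  · exact ⟨x + 1, y, by omega⟩
  · exact ⟨x - 1, y, by omega⟩

theorem triLattice_dist_origin (v : ℤ × ℤ) : triLattice.dist 0 v = hexNorm v := by
  obtain ⟨u, hu, p, hp⟩ := triLattice.exists_walk_length_eq_of_forall_exists_adj hexNorm
    (fun _ ↦ exists_adj_hexNorm_add_one_eq) v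
  obtain rfl := hexNorm_eq_zero_iff.mp hu
  refine le_antisymm (hp ▸ triLattice.dist_le p) ?_
  have := SimpleGraph.Reachable.le_add_dist_of_forall_adj
    (fun _ _ ↦ hexNorm_le_add_one_of_adj) ⟨p⟩
  rwa [hu, zero_add] at this

theorem mem_ball_iff {r : ℕ} {v : ℤ × ℤ} : v ∈ ball r ↔ hexNorm v ≤ r := by
  rw [ball, Set.mem_ofPred_eq, ← triLattice_dist_origin]; rfl

theorem mem_sphere_iff {r : ℕ} {v : ℤ × ℤ} : v ∈ sphere r ↔ hexNorm v = r := by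
  rw [sphere, Set.mem_ofPred_eq, ← triLattice_dist_origin]; rfl

abbrev ballGraph (r : ℕ) : SimpleGraph (BallV r) := triLattice.induce (ball r)

namespace BallV

variable {r : ℕ}

def center (r : ℕ) : BallV r := ⟨0, mem_ball_iff.mpr (by simp [hexNorm])⟩

theorem exists_walk_center (a : BallV r) :
    ∃ p : (ballGraph r).Walk (center r) a, p.length = hexNorm a.1 := by
  have descend (a : BallV r) (ha : hexNorm a.1 ≠ 0) :
      ∃ w, (ballGraph r).Adj w a ∧ hexNorm w.1 + 1 = hexNorm a.1 := by
    obtain ⟨w, hw, hwa⟩ := exists_adj_hexNorm_add_one_eq ha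
    have := mem_ball_iff.mp a.2
    exact ⟨⟨w, mem_ball_iff.mpr (by omega)⟩, hw, hwa⟩
  obtain ⟨u, hu, p, hp⟩ :=
    (ballGraph r).exists_walk_length_eq_of_forall_exists_adj _ descend a
  obtain rfl : u = center r := Subtype.ext (hexNorm_eq_zero_iff.mp hu)
  exact ⟨p, hp⟩

theorem exists_walk_sphere (a : BallV r) :
    ∃ c : BallV r, c.1 ∈ sphere r ∧
      ∃ p : (ballGraph r).Walk c a, p.length = r - hexNorm a.1 := by
  have ascend (a : BallV r) (ha : r - hexNorm a.1 ≠ 0) :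
      ∃ w, (ballGraph r).Adj w a ∧ r - hexNorm w.1 + 1 = r - hexNorm a.1 := by
    obtain ⟨w, hw, hwa⟩ := exists_adj_hexNorm_eq_add_one a.1
    exact ⟨⟨w, mem_ball_iff.mpr (by omega)⟩, hw, show r - hexNorm w + 1 = _ by omega⟩
  obtain ⟨c, hc, p, hp⟩ :=
    (ballGraph r).exists_walk_length_eq_of_forall_exists_adj _ ascend a
  have := mem_ball_iff.mp c.2
  exact ⟨c, mem_sphere_iff.mpr (by omega), p, hp⟩

end BallV

namespace GluedV

variable {r : ℕ} {e : ℤ × ℤ → ℤ × ℤ}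

def north (a : BallV r) : GluedV r e := Quot.mk _ (.inl a)

def south (b : BallV r) : GluedV r e := Quot.mk _ (.inr b)

@[elab_as_elim]
theorem ind {motive : GluedV r e → Prop} (north : ∀ a, motive (GluedV.north a))
    (south : ∀ b, motive (GluedV.south b)) (v : GluedV r e) : motive v :=
  Quot.ind (Sum.rec north south) v

theorem npole_eq : npole r e = north (BallV.center r) := rfl

theorem spole_eq : spole r e = south (BallV.center r) := rfl

theorem north_eq_south {a b : BallV r} (ha : a.1 ∈ sphere r) (hb : b.1 = e a.1) :
    (north a : GluedV r e) = south b :=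
  Quot.sound ⟨a, b, ha, hb, rfl, rfl⟩

open Classical in
noncomputable def coords : GluedV r e → (ℤ × ℤ) ⊕ (ℤ × ℤ) :=
  Quot.lift
    (Sum.elim (fun a ↦ if a.1 ∈ sphere r then .inr (e a) else .inl a) (fun b ↦ .inr b))
    (by rintro _ _ ⟨a, b, ha, hb, rfl, rfl⟩; simp [ha, hb])

theorem north_injective (hinj : Set.InjOn e (sphere r)) :
    Function.Injective (north : BallV r → GluedV r e) := by
  intro a b h
  have h' := congrArg coords h
  simp only [north, coords, Sum.elim_inl] at h'
  by_cases ha : a.1 ∈ sphere r <;> by_cases hb : b.1 ∈ sphere r <;> simp [ha, hb] at h'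
  · exact Subtype.ext (hinj ha hb h')
  · exact Subtype.ext h'

theorem south_injective : Function.Injective (south : BallV r → GluedV r e) := by
  intro a b h
  exact Subtype.ext (by simpa [south, coords] using congrArg coords h)

def northHom (hinj : Set.InjOn e (sphere r)) : ballGraph r →g Dstar r e where
  toFun := north
  map_rel' {a b} h := (SimpleGraph.fromRel_adj _ _ _).mpr
    ⟨(north_injective hinj).ne h.ne, .inl ⟨a, b, h, .inl ⟨rfl, rfl⟩⟩⟩

def southHom : ballGraph r →g Dstar r e where
  toFun := south
  map_rel' {a b} h := (SimpleGraph.fromRel_adj _ _ _).mpr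
    ⟨south_injective.ne h.ne, .inl ⟨a, b, h, .inr ⟨rfl, rfl⟩⟩⟩

/-- The distance from the north pole; the paper's latitude is `φ = r - colatitude`. -/
def colatitude (hm : Set.MapsTo e (sphere r) (sphere r)) : GluedV r e → ℕ :=
  Quot.lift (Sum.elim (fun a ↦ hexNorm a.1) (fun b ↦ 2 * r - hexNorm b.1)) <| by
    rintro _ _ ⟨a, b, ha, hb, rfl, rfl⟩
    have := mem_sphere_iff.mp ha
    have := mem_sphere_iff.mp (hb ▸ hm ha)
    simp only [Sum.elim_inl, Sum.elim_inr]
    omega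

variable (hm : Set.MapsTo e (sphere r) (sphere r))

@[simp] theorem colatitude_north (a : BallV r) : colatitude hm (north a) = hexNorm a.1 := rfl

@[simp] theorem colatitude_south (b : BallV r) :
    colatitude hm (south b) = 2 * r - hexNorm b.1 := rfl

theorem colatitude_le (v : GluedV r e) : colatitude hm v ≤ 2 * r := by
  induction v using GluedV.ind with
  | north a => exact (mem_ball_iff.mp a.2).trans (by omega)
  | south b => exact Nat.sub_le _ _

theorem colatitude_le_add_one_of_adj {x y : GluedV r e} (h : (Dstar r e).Adj x y) :
    colatitude hm y ≤ colatitude hm x + 1 := by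
  obtain ⟨-, ⟨a, b, hab, hxy⟩ | ⟨a, b, hab, hxy⟩⟩ := (SimpleGraph.fromRel_adj _ _ _).mp h <;>
  · have h₁ := hexNorm_le_add_one_of_adj hab
    have h₂ := hexNorm_le_add_one_of_adj hab.symm
    have := mem_ball_iff.mp a.2
    have := mem_ball_iff.mp b.2
    rcases hxy with ⟨rfl, rfl⟩ | ⟨rfl, rfl⟩ <;>
    · dsimp only [colatitude, Sum.elim_inl, Sum.elim_inr]
      omega

@[simp] theorem colatitude_npole : colatitude hm (npole r e) = 0 := by
  simp [npole_eq, BallV.center, hexNorm]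

@[simp] theorem colatitude_spole : colatitude hm (spole r e) = 2 * r := by
  simp [spole_eq, BallV.center, hexNorm]

theorem exists_walk_npole_north (hinj : Set.InjOn e (sphere r)) (a : BallV r) :
    ∃ p : (Dstar r e).Walk (npole r e) (north a), p.length = hexNorm a.1 := by
  obtain ⟨p, hp⟩ := BallV.exists_walk_center a
  exact ⟨p.map (northHom hinj), (p.length_map _).trans hp⟩

theorem exists_walk_spole_south (b : BallV r) :
    ∃ p : (Dstar r e).Walk (spole r e) (south b), p.length = hexNorm b.1 := by
  obtain ⟨p, hp⟩ := BallV.exists_walk_center b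
  exact ⟨p.map southHom, (p.length_map _).trans hp⟩

theorem exists_walk_north_sphere (hinj : Set.InjOn e (sphere r)) (a : BallV r) :
    ∃ c : BallV r, c.1 ∈ sphere r ∧
      ∃ p : (Dstar r e).Walk (north c) (north a), p.length = r - hexNorm a.1 := by
  obtain ⟨c, hc, p, hp⟩ := BallV.exists_walk_sphere a
  exact ⟨c, hc, p.map (northHom hinj), (p.length_map _).trans hp⟩

theorem exists_walk_south_sphere (b : BallV r) :
    ∃ c : BallV r, c.1 ∈ sphere r ∧
      ∃ p : (Dstar r e).Walk (south c) (south b), p.length = r - hexNorm b.1 := by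
  obtain ⟨c, hc, p, hp⟩ := BallV.exists_walk_sphere b
  exact ⟨c, hc, p.map southHom, (p.length_map _).trans hp⟩

variable (he : Set.BijOn e (sphere r) (sphere r))
include he

theorem exists_walk_npole (v : GluedV r e) :
    ∃ p : (Dstar r e).Walk (npole r e) v, p.length ≤ colatitude he.mapsTo v := by
  induction v using GluedV.ind with
  | north a =>
    obtain ⟨p, hp⟩ := exists_walk_npole_north he.injOn a
    exact ⟨p, hp.le⟩
  | south b =>
    obtain ⟨c, hc, p, hp⟩ := exists_walk_south_sphere b
    obtain ⟨d, hd, hdc⟩ := he.surjOn hc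
    have hdr := mem_sphere_iff.mp hd
    obtain ⟨q, hq⟩ := exists_walk_npole_north he.injOn ⟨d, mem_ball_iff.mpr hdr.le⟩
    refine ⟨(q.copy rfl (north_eq_south hd hdc.symm)).append p, ?_⟩
    have := mem_ball_iff.mp b.2
    rw [SimpleGraph.Walk.length_append, SimpleGraph.Walk.length_copy, hp, hq.trans hdr,
      colatitude_south]
    omega

theorem exists_walk_spole (v : GluedV r e) :
    ∃ p : (Dstar r e).Walk (spole r e) v, p.length ≤ 2 * r - colatitude he.mapsTo v := by
  induction v using GluedV.ind with
  | north a =>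
    obtain ⟨c, hc, p, hp⟩ := exists_walk_north_sphere he.injOn a
    have hcr := mem_sphere_iff.mp (he.mapsTo hc)
    obtain ⟨q, hq⟩ := exists_walk_spole_south ⟨e c, mem_ball_iff.mpr hcr.le⟩
    refine ⟨(q.copy rfl (north_eq_south hc rfl).symm).append p, ?_⟩
    have := mem_ball_iff.mp a.2
    rw [SimpleGraph.Walk.length_append, SimpleGraph.Walk.length_copy, hp, hq.trans hcr,
      colatitude_north]
    omega
  | south b =>
    obtain ⟨p, hp⟩ := exists_walk_spole_south b
    have := mem_ball_iff.mp b.2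
    refine ⟨p, ?_⟩
    rw [hp, colatitude_south]
    omega

theorem dist_npole (v : GluedV r e) : (Dstar r e).dist (npole r e) v = colatitude he.mapsTo v := by
  obtain ⟨p, hp⟩ := exists_walk_npole he v
  refine le_antisymm ((SimpleGraph.dist_le p).trans hp) ?_
  simpa using SimpleGraph.Reachable.le_add_dist_of_forall_adj
    (fun _ _ ↦ colatitude_le_add_one_of_adj he.mapsTo) ⟨p⟩

theorem dist_spole (v : GluedV r e) :
    (Dstar r e).dist (spole r e) v = 2 * r - colatitude he.mapsTo v := by
  obtain ⟨p, hp⟩ := exists_walk_spole he v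
  refine le_antisymm ((SimpleGraph.dist_le p).trans hp) ?_
  have := SimpleGraph.Reachable.le_add_dist_of_forall_adj
    (fun _ _ ↦ colatitude_le_add_one_of_adj he.mapsTo) ⟨p.reverse⟩
  rw [colatitude_spole, SimpleGraph.dist_comm] at this
  omega

end GluedV

theorem stmt_16_general (r : ℕ) (e : ℤ × ℤ → ℤ × ℤ)
    (he : Set.BijOn e (sphere r) (sphere r)) :
    (Dstar r e).dist (npole r e) (spole r e) = 2 * r ∧
    ∀ v : GluedV r e,
      (Dstar r e).dist (npole r e) v + (Dstar r e).dist (spole r e) v = 2 * r := by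
  refine ⟨by rw [GluedV.dist_npole he, GluedV.colatitude_spole], fun v ↦ ?_⟩
  rw [GluedV.dist_npole he, GluedV.dist_spole he]
  have := GluedV.colatitude_le he.mapsTo v
  omega

/-- In the triangulation `D*_{r,t}`, the distance between the poles `n` and
`s` is `2r`, and every vertex `v` satisfies
`dist(n,v) + dist(s,v) = 2r`. -/
theorem stmt_16 (r : ℕ) (hr : 2 ≤ r) (e : ℤ × ℤ → ℤ × ℤ)
    (he : Set.BijOn e (sphere r) (sphere r))
    (hadj : SphereAdjPreserving r e)
    (hcor : ∀ v ∈ sphere r, Corner r v → ¬ Corner r (e v)) :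
    (Dstar r e).dist (npole r e) (spole r e) = 2 * r ∧
    ∀ v : GluedV r e,
      (Dstar r e).dist (npole r e) v + (Dstar r e).dist (spole r e) v = 2 * r :=
  stmt_16_general r e he
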